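/- arXiv:1506.08041 — 2 statements merged into one kernel-verified Lean document; each statement's English description precedes it below -/
import Mathlib

section
/- Let (u_n) and (v_n) be sequences of harmonic functions on the open unit disc 𝔻 ⊂ ℝ² such that for each n: Z(u_n) = Z(v_n) and u_n(x)·v_n(x) > 0 for every x ∈ 𝔻 ∖ Z(u_n) (i.e. the ratio u_n/v_n is positive off the common zero set). Suppose u_n converges to u and v_n converges to v uniformly on compact subsets of 𝔻, where u and v are harmonic on 𝔻 and neither is identically zero. Then Z(u) = Z(v). -/
open Metric Set Filter

noncomputable section

abbrev En (n : ℕ) : Type := EuclideanSpace ℝ (Fin n)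

/-- The Laplacian of `u` at `x`, computed from the second iterated Fréchet derivative. -/
def laplacianAt {n : ℕ} (u : En n → ℝ) (x : En n) : ℝ :=
  ∑ i : Fin n, iteratedFDeriv ℝ 2 u x ![EuclideanSpace.single i 1, EuclideanSpace.single i 1]

/-- `u` is harmonic on `Ω`: twice continuously differentiable with vanishing Laplacian. -/
def HarmonicOnSet {n : ℕ} (u : En n → ℝ) (Ω : Set (En n)) : Prop :=
  ContDiffOn ℝ 2 u Ω ∧ ∀ x ∈ Ω, laplacianAt u x = 0

/-- The zero set of `u` within `Ω`. -/
def zeroSet {n : ℕ} (u : En n → ℝ) (Ω : Set (En n)) : Set (En n) :=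
  {x ∈ Ω | u x = 0}

/-- The collection of nodal domains of `u` in `Ω`, i.e. the connected components of
`Ω \ Z(u)`. -/
def nodalComponents {n : ℕ} (u : En n → ℝ) (Ω : Set (En n)) : Set (Set (En n)) :=
  {C | ∃ x ∈ Ω \ zeroSet u Ω, C = connectedComponentIn (Ω \ zeroSet u Ω) x}

/-!
Passing to the limit gives `U * V ≥ 0` on the disc. If `U x₀ = 0` but `V x₀ ≠ 0`, then `V` has a
fixed sign near `x₀`, so `U` or `-U` has a local minimum at `x₀`. The strong minimum principle
then forces `U ≡ 0`: near `x₀` write `U = Re F` with `F` holomorphic; if `F` were not locally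
constant, the open mapping theorem would make `F` hit values of smaller real part than `F x₀`.
Real analyticity of `U` spreads `U = 0` from a neighbourhood of `x₀` to the whole disc.
-/

open InnerProductSpace Topology Laplacian

theorem isLocalMin_of_mul_nonneg {X : Type*} [TopologicalSpace X] {f g : X → ℝ} {x : X}
    (hg : ContinuousAt g x) (hgx : 0 < g x) (hfg : ∀ᶠ y in 𝓝 x, 0 ≤ f y * g y)
    (hfx : f x = 0) : IsLocalMin f x := by
  filter_upwards [hfg, hg.eventually (lt_mem_nhds hgx)] with y hy hgy
  rw [hfx]
  exact nonneg_of_mul_nonneg_left hy hgy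

namespace InnerProductSpace

variable {E E' F : Type*} [NormedAddCommGroup E] [InnerProductSpace ℝ E] [FiniteDimensional ℝ E]
  [NormedAddCommGroup E'] [InnerProductSpace ℝ E'] [FiniteDimensional ℝ E']
  [NormedAddCommGroup F] [NormedSpace ℝ F]

theorem laplacian_comp_linearIsometryEquiv (l : E ≃ₗᵢ[ℝ] E') (f : E' → F) :
    Δ (f ∘ l) = Δ f ∘ l := by
  ext x
  have hcomp : iteratedFDeriv ℝ 2 (f ∘ l) x =
      (iteratedFDeriv ℝ 2 f (l x)).compContinuousLinearMap fun _ => (l : E →L[ℝ] E') := by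
    have h := l.toContinuousLinearEquiv.iteratedFDerivWithin_comp_right f uniqueDiffOn_univ
      (mem_univ (l x)) 2
    simp only [iteratedFDerivWithin_univ, preimage_univ] at h
    exact h
  let v := stdOrthonormalBasis ℝ E
  rw [laplacian_eq_iteratedFDeriv_orthonormalBasis (f ∘ l) v,
    laplacian_eq_iteratedFDeriv_orthonormalBasis f (v.map l)]
  refine Finset.sum_congr rfl fun i _ => ?_
  simp only [hcomp, ContinuousMultilinearMap.compContinuousLinearMap_apply,
    OrthonormalBasis.map_apply]
  congr 1 with j
  fin_cases j <;> rfl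

theorem HarmonicAt.comp_linearIsometryEquiv {f : E' → F} (l : E ≃ₗᵢ[ℝ] E') {x : E}
    (hf : HarmonicAt f (l x)) : HarmonicAt (f ∘ l) x :=
  ⟨hf.1.comp x l.contDiff.contDiffAt, by
    rw [laplacian_comp_linearIsometryEquiv]
    exact hf.2.comp_tendsto l.continuous.continuousAt⟩

theorem HarmonicAt.eventuallyEq_of_isLocalMin {f : ℂ → ℝ} {z : ℂ} (hf : HarmonicAt f z)
    (hmin : IsLocalMin f z) : f =ᶠ[𝓝 z] fun _ => f z := by
  obtain ⟨ε, hε, hball⟩ := Metric.isOpen_iff.1 (isOpen_setOfPred_harmonicAt f) z hf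
  obtain ⟨F, hFan, hFre⟩ := HarmonicOnNhd.exists_analyticOnNhd_ball_re_eq fun _ hy => hball hy
  have hzε : z ∈ ball z ε := mem_ball_self hε
  rcases (hFan z hzε).eventually_constant_or_nhds_le_map_nhds with hconst | hopen
  · filter_upwards [hconst, ball_mem_nhds z hε] with y hy hyε
    calc f y = (F y).re := (hFre hyε).symm
      _ = f z := by rw [hy]; exact hFre hzε
  · exfalso
    -- `F` is open at `z`, so the local minimum of `Re ∘ F` at `z` is one of `Re` at `F z`
    have hre : IsLocalMin Complex.re (F z) := hopen <| Filter.mem_map.2 <| by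
      filter_upwards [hmin, ball_mem_nhds z hε] with y hy hyε
      simpa [hFre hyε, hFre hzε] using hy
    simpa using congrArg (· 1) (hre.hasFDerivAt_eq_zero Complex.reCLM.hasFDerivAt)

theorem HarmonicOnNhd.eqOn_of_isLocalMin {f : ℂ → ℝ} {Ω : Set ℂ} (hf : HarmonicOnNhd f Ω)
    (hΩ : IsPreconnected Ω) {z : ℂ} (hz : z ∈ Ω) (hmin : IsLocalMin f z) :
    EqOn f (fun _ => f z) Ω :=
  AnalyticOnNhd.eqOn_of_preconnected_of_eventuallyEq (fun x hx => HarmonicAt.analyticAt (hf x hx))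
    analyticOnNhd_const hΩ hz ((hf z hz).eventuallyEq_of_isLocalMin hmin)

theorem HarmonicOnNhd.eqOn_of_isLocalMin_of_finrank_eq_two (hE : Module.finrank ℝ E = 2)
    {f : E → ℝ} {Ω : Set E} (hf : HarmonicOnNhd f Ω) (hΩ : IsPreconnected Ω) {x : E} (hx : x ∈ Ω)
    (hmin : IsLocalMin f x) : EqOn f (fun _ => f x) Ω := by
  let l : ℂ ≃ₗᵢ[ℝ] E := Complex.orthonormalBasisOneI.repr.trans
    ((stdOrthonormalBasis ℝ E).reindex (finCongr hE)).repr.symm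
  have hfl : HarmonicOnNhd (f ∘ l) (l ⁻¹' Ω) := fun z hz => (hf _ hz).comp_linearIsometryEquiv l
  have hΩl : IsPreconnected (l ⁻¹' Ω) := l.toHomeomorph.isPreconnected_preimage.2 hΩ
  have hminl : IsLocalMin (f ∘ l) (l.symm x) := by
    apply IsLocalMin.comp_continuous _ l.continuous.continuousAt
    simpa using hmin
  intro y hy
  simpa using hfl.eqOn_of_isLocalMin hΩl (by simpa using hx) hminl
    (show l.symm y ∈ l ⁻¹' Ω by simpa using hy)

theorem HarmonicOnNhd.eqOn_zero_of_mul_nonneg (hE : Module.finrank ℝ E = 2) {f g : E → ℝ}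
    {Ω : Set E} (hf : HarmonicOnNhd f Ω) (hΩ : IsPreconnected Ω) {x : E} (hx : x ∈ Ω)
    (hg : ContinuousAt g x) (hfg : ∀ᶠ y in 𝓝 x, 0 ≤ f y * g y) (hfx : f x = 0) (hgx : g x ≠ 0) :
    EqOn f 0 Ω := by
  intro y hy
  rcases hgx.lt_or_gt with hneg | hpos
  · have hmin : IsLocalMin (-f) x :=
      isLocalMin_of_mul_nonneg hg.neg (neg_pos.2 hneg) (by simpa using hfg) (by simp [hfx])
    simpa [hfx] using hf.neg.eqOn_of_isLocalMin_of_finrank_eq_two hE hΩ hx hmin hy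
  · simpa [hfx] using hf.eqOn_of_isLocalMin_of_finrank_eq_two hE hΩ hx
      (isLocalMin_of_mul_nonneg hg hpos hfg hfx) hy

end InnerProductSpace

theorem HarmonicOnSet.harmonicOnNhd {n : ℕ} {u : En n → ℝ} {Ω : Set (En n)}
    (hu : HarmonicOnSet u Ω) (hΩ : IsOpen Ω) : HarmonicOnNhd u Ω := fun x hx =>
  ⟨hu.1.contDiffAt (hΩ.mem_nhds hx), by
    filter_upwards [hΩ.mem_nhds hx] with y hy
    rw [laplacian_eq_iteratedFDeriv_orthonormalBasis u (EuclideanSpace.basisFun (Fin n) ℝ)]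
    simpa [laplacianAt] using hu.2 y hy⟩

theorem zeroSet_subset_of_mul_nonneg {U V : En 2 → ℝ} {Ω : Set (En 2)} (hΩ : IsOpen Ω)
    (hΩc : IsPreconnected Ω) (hU : HarmonicOnSet U Ω) (hV : ContinuousOn V Ω)
    (hUV : ∀ x ∈ Ω, 0 ≤ U x * V x) (hUne : ∃ x ∈ Ω, U x ≠ 0) :
    zeroSet U Ω ⊆ zeroSet V Ω := by
  rintro x ⟨hx, hUx⟩
  refine ⟨hx, by_contra fun hVx => ?_⟩
  obtain ⟨y, hy, hUy⟩ := hUne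
  exact hUy <| (hU.harmonicOnNhd hΩ).eqOn_zero_of_mul_nonneg finrank_euclideanSpace_fin hΩc hx
    (hV.continuousAt (hΩ.mem_nhds hx)) (eventually_of_mem (hΩ.mem_nhds hx) hUV) hUx hVx hy

theorem stmt5_general (u v : ℕ → En 2 → ℝ) (U V : En 2 → ℝ)
    (hpos : ∀ m, ∀ x ∈ ball (0 : En 2) 1 \ zeroSet (u m) (ball 0 1), 0 < u m x * v m x)
    (hU : HarmonicOnSet U (ball 0 1)) (hV : HarmonicOnSet V (ball 0 1))
    (hUne : ∃ x ∈ ball (0 : En 2) 1, U x ≠ 0)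
    (hVne : ∃ x ∈ ball (0 : En 2) 1, V x ≠ 0)
    (hconvU : ∀ K : Set (En 2), K ⊆ ball (0 : En 2) 1 → IsCompact K →
      TendstoUniformlyOn (fun m x => u m x) U atTop K)
    (hconvV : ∀ K : Set (En 2), K ⊆ ball (0 : En 2) 1 → IsCompact K →
      TendstoUniformlyOn (fun m x => v m x) V atTop K) :
    zeroSet U (ball 0 1) = zeroSet V (ball 0 1) := by
  have hUV : ∀ x ∈ ball (0 : En 2) 1, 0 ≤ U x * V x := by
    intro x hx
    have hxK : {x} ⊆ ball (0 : En 2) 1 := singleton_subset_iff.2 hx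
    have hlim := ((hconvU {x} hxK isCompact_singleton).tendsto_at rfl).mul
      ((hconvV {x} hxK isCompact_singleton).tendsto_at rfl)
    refine ge_of_tendsto hlim (Eventually.of_forall fun m => ?_)
    by_cases hux : u m x = 0
    · simp [hux]
    · exact (hpos m x ⟨hx, fun h => hux h.2⟩).le
  have hball := (convex_ball (0 : En 2) 1).isPreconnected
  refine (zeroSet_subset_of_mul_nonneg isOpen_ball hball hU hV.1.continuousOn hUV hUne).antisymm
    (zeroSet_subset_of_mul_nonneg isOpen_ball hball hV hU.1.continuousOn ?_ hVne)
  intro x hx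
  rw [mul_comm]
  exact hUV x hx

theorem stmt5 (u v : ℕ → En 2 → ℝ) (U V : En 2 → ℝ)
    (hu : ∀ m, HarmonicOnSet (u m) (ball 0 1))
    (hv : ∀ m, HarmonicOnSet (v m) (ball 0 1))
    (hz : ∀ m, zeroSet (u m) (ball 0 1) = zeroSet (v m) (ball 0 1))
    (hpos : ∀ m, ∀ x ∈ ball (0 : En 2) 1 \ zeroSet (u m) (ball 0 1), 0 < u m x * v m x)
    (hU : HarmonicOnSet U (ball 0 1)) (hV : HarmonicOnSet V (ball 0 1))
    (hUne : ∃ x ∈ ball (0 : En 2) 1, U x ≠ 0)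
    (hVne : ∃ x ∈ ball (0 : En 2) 1, V x ≠ 0)
    (hconvU : ∀ K : Set (En 2), K ⊆ ball (0 : En 2) 1 → IsCompact K →
      TendstoUniformlyOn (fun m x => u m x) U atTop K)
    (hconvV : ∀ K : Set (En 2), K ⊆ ball (0 : En 2) 1 → IsCompact K →
      TendstoUniformlyOn (fun m x => v m x) V atTop K) :
    zeroSet U (ball 0 1) = zeroSet V (ball 0 1) :=
  stmt5_general u v U V hpos hU hV hUne hVne hconvU hconvV
end
end

section
/- Let v be a non-constant harmonic function on the open unit ball B₁ ⊂ ℝⁿ with Z(v) ∩ B_{1/2} ≠ ∅, write δ(x) = dist(x, Z(v)), and suppose l > 0 and γ ≥ 1 are constants such that |v(x)| ≥ l · δ(x)^γ for all x ∈ B_{3/4}. Let C > 1. Then there exists c ∈ (0, 1/2), depending only on v, l, γ and C, with the following property: for every finite sequence of points x₀, x₁, …, x_m such that (i) |v(x_{i+1})| ≥ C·|v(x_i)| for i = 0, …, m−1, (ii) |x_{i+1} − x_i| ≤ (3/4)·δ(x_i) for i = 0, …, m−1, and (iii) x₀ ∈ B_{1/8}, x_i ∈ B_{1/4} for i = 0,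 …, m−1, and x_m ∈ B_{1/2} ∖ B_{1/4}, one has δ(x_m) ≥ c. -/
open Metric Set Filter

noncomputable section

theorem stmt13 (n : ℕ) (v : En n → ℝ) (l γ C : ℝ)
    (hv : HarmonicOnSet v (ball 0 1))
    (hnc : ¬ ∃ c : ℝ, ∀ x ∈ ball (0 : En n) 1, v x = c)
    (hZ : (zeroSet v (ball 0 1) ∩ ball (0 : En n) (1/2)).Nonempty)
    (hl : 0 < l) (hγ : 1 ≤ γ)
    (hLoj : ∀ x ∈ ball (0 : En n) (3/4),
      l * infDist x (zeroSet v (ball 0 1)) ^ γ ≤ |v x|)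
    (hC : 1 < C) :
    ∃ c : ℝ, 0 < c ∧ c < 1/2 ∧
      ∀ (m : ℕ) (x : ℕ → En n),
        (∀ i < m, C * |v (x i)| ≤ |v (x (i + 1))|) →
        (∀ i < m, dist (x (i + 1)) (x i) ≤
          (3/4) * infDist (x i) (zeroSet v (ball 0 1))) →
        x 0 ∈ ball (0 : En n) (1/8) →
        (∀ i < m, x i ∈ ball (0 : En n) (1/4)) →
        x m ∈ ball (0 : En n) (1/2) \ ball (0 : En n) (1/4) →
        c ≤ infDist (x m) (zeroSet v (ball 0 1)) := by
  classical
  set Z : Set (En n) := zeroSet v (ball 0 1) with hZdef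
  obtain ⟨z₀, hz₀⟩ := hZ
  have hZne : Z.Nonempty := ⟨z₀, hz₀.1⟩
  have hC0 : (0:ℝ) < C := lt_trans one_pos hC
  have hγ0 : (0:ℝ) < γ := lt_of_lt_of_le one_pos hγ
  -- Lipschitz constant on closedBall 0 (1/2)
  have hball : closedBall (0:En n) (1/2) ⊆ ball (0:En n) 1 :=
    closedBall_subset_ball (by norm_num)
  have hdiff : ∀ y ∈ ball (0:En n) 1, DifferentiableAt ℝ v y := fun y hy =>
    (hv.1.differentiableOn (by norm_num)).differentiableAt (isOpen_ball.mem_nhds hy)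
  have hcont : ContinuousOn (fderiv ℝ v) (ball (0:En n) 1) :=
    hv.1.continuousOn_fderiv_of_isOpen isOpen_ball (by norm_num)
  obtain ⟨K, hK⟩ := (isCompact_closedBall (0:En n) (1/2)).exists_bound_of_continuousOn
    (hcont.mono hball)
  set L : ℝ := max K 0 + 1 with hLdef
  have hL0 : (0:ℝ) < L := by positivity
  have hLip : ∀ a ∈ closedBall (0:En n) (1/2), ∀ b ∈ closedBall (0:En n) (1/2),
      |v a - v b| ≤ L * dist a b := by
    intro a ha b hb
    have h1 : ‖v a - v b‖ ≤ L * ‖a - b‖ := by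
      refine (convex_closedBall (0:En n) (1/2)).norm_image_sub_le_of_norm_fderiv_le
        (fun y hy => hdiff y (hball hy))
        (fun y hy => le_trans (hK y hy) ?_) hb ha
      have := le_max_left K 0
      linarith
    simpa [Real.norm_eq_abs, dist_eq_norm] using h1
  set q : ℝ := C ^ (-γ⁻¹ : ℝ) with hqdef
  have hq0 : 0 < q := Real.rpow_pos_of_pos hC0 _
  have hq1 : q < 1 :=
    Real.rpow_lt_one_of_one_lt_of_neg hC (neg_lt_zero.mpr (inv_pos.mpr hγ0))
  have h1q : (0:ℝ) < 1 - q := by linarith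
  set c₁ : ℝ := (l / L) * ((1 - q) / 6) ^ γ with hc1def
  have hc1 : 0 < c₁ := by
    apply mul_pos (div_pos hl hL0) (Real.rpow_pos_of_pos (by linarith) γ)
  refine ⟨min (1/16) (c₁/4), by positivity,
    lt_of_le_of_lt (min_le_left _ _) (by norm_num), ?_⟩
  intro m x hgrow hstep h0 hmem hm
  have hm1 : 1 ≤ m := by
    rcases Nat.eq_zero_or_pos m with h | h
    · exfalso
      apply hm.2
      rw [h]
      exact ball_subset_ball (by norm_num) h0
    · exact h
  have hm1' : m - 1 + 1 = m := Nat.sub_add_cancel hm1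
  have hmlt : m - 1 < m := by omega
  set d : ℝ := infDist (x (m-1)) Z with hd
  have hd0 : (0:ℝ) ≤ d := infDist_nonneg
  have hstepm : dist (x m) (x (m-1)) ≤ (3/4) * d := by
    have := hstep (m-1) hmlt
    rwa [hm1'] at this
  have hquarter : d / 4 ≤ infDist (x m) Z := by
    have h1 : d ≤ infDist (x m) Z + dist (x (m-1)) (x m) :=
      infDist_le_infDist_add_dist
    rw [dist_comm] at h1
    linarith
  rcases le_or_gt (1/4 : ℝ) d with hcase | hcase
  · calc min (1/16 : ℝ) (c₁/4) ≤ 1/16 := min_le_left _ _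
      _ ≤ d / 4 := by linarith
      _ ≤ _ := hquarter
  -- main case : d < 1/4
  obtain ⟨z, hzcl, hzd⟩ := isClosed_closure.exists_infDist_eq_dist
    (closure_nonempty_iff.mpr hZne) (x (m-1))
  rw [infDist_closure] at hzd
  have hxm1 : x (m-1) ∈ ball (0:En n) (1/4) := hmem _ hmlt
  have hxm1' : dist (x (m-1)) 0 < 1/4 := mem_ball.mp hxm1
  have hz_ball : z ∈ ball (0:En n) (1/2) := by
    have h2 : dist z 0 ≤ dist z (x (m-1)) + dist (x (m-1)) 0 := dist_triangle _ _ _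
    have h3 : dist z (x (m-1)) = d := by rw [dist_comm, ← hzd]
    exact mem_ball.mpr (by linarith)
  have hzZ : z ∈ Z := by
    have hz1 : z ∈ ball (0:En n) 1 := ball_subset_ball (by norm_num) hz_ball
    have hcv : ContinuousAt v z :=
      hv.1.continuousOn.continuousAt (isOpen_ball.mem_nhds hz1)
    have hmemcl : v z ∈ closure (v '' Z) := mem_closure_image hcv hzcl
    have himg : v '' Z ⊆ {0} := by
      rintro _ ⟨w, hw, rfl⟩
      exact hw.2
    have hv0 : v z = 0 := by
      have := (closure_minimal himg isClosed_singleton) hmemcl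
      simpa using this
    exact ⟨hz1, hv0⟩
  have hvm1 : |v (x (m-1))| ≤ L * d := by
    have ha : x (m-1) ∈ closedBall (0:En n) (1/2) :=
      mem_closedBall.mpr (by linarith)
    have hb : z ∈ closedBall (0:En n) (1/2) := ball_subset_closedBall hz_ball
    have := hLip (x (m-1)) ha z hb
    rw [hzZ.2, sub_zero, ← hzd] at this
    exact this
  -- geometric growth chain
  have hchain : ∀ k i, i + k ≤ m - 1 → C ^ k * |v (x i)| ≤ |v (x (i + k))| := by
    intro k
    induction k with
    | zero => intro i _; simp
    | succ k ih =>
      intro i hik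
      have h1 : C ^ k * |v (x i)| ≤ |v (x (i+k))| := ih i (by omega)
      calc C ^ (k+1) * |v (x i)| = C * (C ^ k * |v (x i)|) := by ring
        _ ≤ C * |v (x (i+k))| := mul_le_mul_of_nonneg_left h1 hC0.le
        _ ≤ |v (x (i+k+1))| := hgrow (i+k) (by omega)
  -- the decay bound on infDist (x i) Z
  have hLdl : (0:ℝ) ≤ L * d / l := by positivity
  set A : ℝ := (L * d / l) ^ (γ⁻¹ : ℝ) with hAdef
  have hA0 : (0:ℝ) ≤ A := Real.rpow_nonneg hLdl _
  have hdelta : ∀ i < m, infDist (x i) Z ≤ A * q ^ (m - 1 - i) := by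
    intro i hi
    have h1 : l * (infDist (x i) Z) ^ γ ≤ |v (x i)| :=
      hLoj (x i) (ball_subset_ball (by norm_num) (hmem i hi))
    have h2 : C ^ (m-1-i) * |v (x i)| ≤ |v (x (m-1))| := by
      have := hchain (m-1-i) i (by omega)
      rwa [show i + (m-1-i) = m - 1 by omega] at this
    set k := m - 1 - i with hk
    have hCk : (0:ℝ) < C ^ k := pow_pos hC0 k
    have h5 : |v (x i)| ≤ L * d / C ^ k := by
      rw [le_div_iff₀ hCk, mul_comm]
      linarith
    have hδ0 : (0:ℝ) ≤ infDist (x i) Z := infDist_nonneg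
    have h6 : (infDist (x i) Z) ^ γ ≤ (L * d / l) / C ^ k := by
      rw [div_div]
      rw [le_div_iff₀ (by positivity)]
      calc (infDist (x i) Z) ^ γ * (l * C ^ k)
          = C ^ k * (l * (infDist (x i) Z) ^ γ) := by ring
        _ ≤ C ^ k * |v (x i)| :=
            mul_le_mul_of_nonneg_left h1 hCk.le
        _ ≤ L * d := by
            have := h5
            rw [le_div_iff₀ hCk] at this
            linarith
    have h7 : infDist (x i) Z ≤ ((L * d / l) / C ^ k) ^ (γ⁻¹ : ℝ) := by
      have h := Real.rpow_le_rpow (Real.rpow_nonneg hδ0 γ) h6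
        (le_of_lt (inv_pos.mpr hγ0))
      rwa [Real.rpow_rpow_inv hδ0 (ne_of_gt hγ0)] at h
    have heq : ((L * d / l) / C ^ k) ^ (γ⁻¹ : ℝ) = A * q ^ k := by
      rw [Real.div_rpow hLdl hCk.le, div_eq_mul_inv, hAdef]
      congr 1
      rw [hqdef, ← Real.rpow_natCast (C ^ (-γ⁻¹:ℝ)) k, ← Real.rpow_natCast C k,
        ← Real.rpow_mul hC0.le, ← Real.rpow_mul hC0.le, ← Real.rpow_neg hC0.le]
      congr 1
      ring
    rw [heq] at h7
    exact h7
  -- displacement bound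
  have hdist : (1/8 : ℝ) ≤ dist (x 0) (x m) := by
    have h1 : ‖x 0‖ < 1/8 := mem_ball_zero_iff.mp h0
    have h2 : ¬ ‖x m‖ < 1/4 := fun h => hm.2 (mem_ball_zero_iff.mpr h)
    push_neg at h2
    have h3 : ‖x m‖ - ‖x 0‖ ≤ ‖x m - x 0‖ := norm_sub_norm_le _ _
    rw [dist_eq_norm, norm_sub_rev]
    linarith
  have hsum1 : dist (x 0) (x m) ≤ ∑ i ∈ Finset.range m, dist (x i) (x (i+1)) :=
    dist_le_range_sum_dist x m
  have hsum2 : ∑ i ∈ Finset.range m, dist (x i) (x (i+1))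
      ≤ ∑ i ∈ Finset.range m, (3/4 : ℝ) * (A * q ^ (m-1-i)) := by
    apply Finset.sum_le_sum
    intro i hi
    have hi' := Finset.mem_range.mp hi
    have hs := hstep i hi'
    rw [dist_comm]
    refine le_trans hs ?_
    exact mul_le_mul_of_nonneg_left (hdelta i hi') (by norm_num)
  have hsum3 : ∑ i ∈ Finset.range m, q ^ (m-1-i) ≤ (1-q)⁻¹ := by
    have hre : ∑ i ∈ Finset.range m, q ^ (m-1-i) = ∑ i ∈ Finset.range m, q ^ i :=
      Finset.sum_range_reflect (fun j => q ^ j) m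
    rw [hre, geom_sum_eq (ne_of_lt hq1) m]
    rw [show (q ^ m - 1)/(q - 1) = (1 - q ^ m)/(1 - q) by
      rw [← neg_div_neg_eq]; ring_nf]
    rw [inv_eq_one_div, div_le_div_iff₀ h1q h1q]
    nlinarith [pow_nonneg hq0.le m]
  have hfinal : (1/8 : ℝ) ≤ (3/4) * A * (1-q)⁻¹ := by
    calc (1/8:ℝ) ≤ dist (x 0) (x m) := hdist
      _ ≤ ∑ i ∈ Finset.range m, dist (x i) (x (i+1)) := hsum1
      _ ≤ ∑ i ∈ Finset.range m, (3/4 : ℝ) * (A * q ^ (m-1-i)) := hsum2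
      _ = ∑ i ∈ Finset.range m, (3/4) * A * q ^ (m-1-i) := by
          apply Finset.sum_congr rfl
          intro i _
          ring
      _ = (3/4) * A * ∑ i ∈ Finset.range m, q ^ (m-1-i) := (Finset.mul_sum _ _ _).symm
      _ ≤ (3/4) * A * (1-q)⁻¹ :=
          mul_le_mul_of_nonneg_left hsum3 (by positivity)
  have hA : (1-q)/6 ≤ A := by
    have h1 : (3/4) * A * (1-q)⁻¹ = ((3/4) * A) / (1-q) := by ring
    rw [h1, le_div_iff₀ h1q] at hfinal
    linarith
  have hB : ((1-q)/6) ^ γ ≤ L * d / l := by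
    have h := Real.rpow_le_rpow (by positivity) hA hγ0.le
    rwa [hAdef, Real.rpow_inv_rpow hLdl (ne_of_gt hγ0)] at h
  have hc1d : c₁ ≤ d := by
    rw [hc1def]
    calc (l/L) * ((1-q)/6) ^ γ ≤ (l/L) * (L * d / l) :=
        mul_le_mul_of_nonneg_left hB (by positivity)
      _ = d := by field_simp
  calc min (1/16 : ℝ) (c₁/4) ≤ c₁/4 := min_le_right _ _
    _ ≤ d/4 := by linarith
    _ ≤ infDist (x m) Z := hquarter
end
end
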